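/- Let I be a finite poset that is forest-like (a finite disjoint union of tree-like posets). Then for every category C with the amalgamation property and the joint embedding property, every diagram F : I → C has a cocone. -/

import Mathlib

/-! A tree-like poset is handled by induction on its construction. Given cocones on the
components `Kₖ` of the poset with its bottom point `b` removed, the composites
`F b ⟶ F x ⟶ Zₖ` agree for all `x` in the connected set `Uₖ` of points above `b`, which gives one
morphism `F b ⟶ Zₖ` per component; amalgamating these finitely many morphisms yields a common
vertex for all components and for `b`. For a forest, the joint embedding property supplies a
common vertex for the cocones on its finitely many trees. -/

open CategoryTheory

universe v u

/-- A subset of a poset is connected: nonempty, and any two of its elements are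
joined by a zigzag of comparabilities within the subset. -/
def ConnIn {α : Type*} [PartialOrder α] (s : Set α) : Prop :=
  s.Nonempty ∧ ∀ x ∈ s, ∀ y ∈ s,
    Relation.ReflTransGen (fun a b => a ∈ s ∧ b ∈ s ∧ (a ≤ b ∨ b ≤ a)) x y

/-- `K` is a connected component of the subset `s` of a poset: the set of
elements of `s` joined within `s` to some fixed element of `s`. -/
def IsComp {α : Type*} [PartialOrder α] (s K : Set α) : Prop :=
  ∃ x ∈ s, K = {y | y ∈ s ∧
    Relation.ReflTransGen (fun a b => a ∈ s ∧ b ∈ s ∧ (a ≤ b ∨ b ≤ a)) x y}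

/-- The inductive class of tree-like subsets of a poset: `s` is tree-like iff
it has a minimal element `b` such that every connected component `K` of
`s \ {b}` is tree-like and the part of `K` lying above `b` is connected (and
nonempty).  This is exactly the inductive rule: a tree-like poset is a disjoint
union of tree-like posets `K₁, …, Kₙ` with connected upward-closed subsets
`Uₖ ⊆ Kₖ`, together with a new bottom point lying below exactly the `Uₖ`. -/
inductive TreeLike {α : Type*} [PartialOrder α] : Set α → Prop
  | mk (s : Set α) (b : α) (hb : b ∈ s)
      (hmin : ∀ x ∈ s, ¬ x < b)
      (hconn : ∀ K : Set α, IsComp (s \ {b}) K → ConnIn {x | x ∈ K ∧ b < x})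
      (hcomp : ∀ K : Set α, IsComp (s \ {b}) K → TreeLike K) : TreeLike s


open Relation

section Components

variable {α : Type*} [PartialOrder α]

def ComparableIn (s : Set α) (a b : α) : Prop :=
  a ∈ s ∧ b ∈ s ∧ (a ≤ b ∨ b ≤ a)

instance (s : Set α) : Std.Symm (ComparableIn s) :=
  ⟨fun _ _ ⟨ha, hb, hab⟩ => ⟨hb, ha, hab.symm⟩⟩

def componentIn (s : Set α) (i : α) : Set α :=
  {y | y ∈ s ∧ ReflTransGen (ComparableIn s) i y}

theorem isComp_componentIn {s : Set α} {i : α} (hi : i ∈ s) : IsComp s (componentIn s i) :=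
  ⟨i, hi, rfl⟩

theorem mem_componentIn_self {s : Set α} {i : α} (hi : i ∈ s) : i ∈ componentIn s i :=
  ⟨hi, .refl⟩

theorem mem_componentIn_of_le {s : Set α} {i j : α} (hi : i ∈ s) (hj : j ∈ s) (hij : i ≤ j) :
    j ∈ componentIn s i :=
  ⟨hj, .single ⟨hi, hj, .inl hij⟩⟩

theorem IsComp.subset {s K : Set α} (hK : IsComp s K) : K ⊆ s := by
  obtain ⟨x, -, rfl⟩ := hK
  exact fun _ hy => hy.1

theorem IsComp.eq_componentIn {s K : Set α} (hK : IsComp s K) {i : α} (hi : i ∈ K) :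
    K = componentIn s i := by
  obtain ⟨x, -, rfl⟩ := hK
  have hxi : ReflTransGen (ComparableIn s) x i := hi.2
  ext y
  exact and_congr_right fun _ => ⟨(symm hxi).trans, hxi.trans⟩

end Components

section Cocones

variable {α : Type*} [PartialOrder α] {C : Type u} [Category.{v} C]

def HasAmalgamation (C : Type u) [Category.{v} C] : Prop :=
  ∀ {A B D : C} (f : A ⟶ B) (g : A ⟶ D), ∃ (X : C) (h : B ⟶ X) (k : D ⟶ X), f ≫ h = g ≫ k

def HasJointEmbedding (C : Type u) [Category.{v} C] : Prop :=
  ∀ (n : ℕ) (o : Fin n → C), ∃ Z : C, ∀ k, Nonempty (o k ⟶ Z)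

theorem HasAmalgamation.exists_of_finite (hC : HasAmalgamation C) {ι : Type*} [Finite ι]
    {A : C} {X : ι → C} (f : ∀ i, A ⟶ X i) :
    ∃ (Z : C) (a : A ⟶ Z), ∀ i, ∃ g : X i ⟶ Z, f i ≫ g = a := by
  classical
  have : Fintype ι := Fintype.ofFinite ι
  suffices ∀ S : Finset ι, ∃ (Z : C) (a : A ⟶ Z), ∀ i ∈ S, ∃ g : X i ⟶ Z, f i ≫ g = a by
    simpa using this Finset.univ
  intro S
  induction S using Finset.induction_on with
  | empty => exact ⟨A, 𝟙 A, by simp⟩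
  | insert j S _ ih =>
    obtain ⟨Z, a, hS⟩ := ih
    obtain ⟨W, h, k, hhk⟩ := hC a (f j)
    refine ⟨W, a ≫ h, fun i hi => ?_⟩
    rcases Finset.mem_insert.mp hi with rfl | hi
    · exact ⟨k, hhk.symm⟩
    · obtain ⟨g, hg⟩ := hS i hi
      exact ⟨g ≫ h, by rw [← Category.assoc, hg]⟩

theorem HasJointEmbedding.exists_of_finite (hC : HasJointEmbedding C) {ι : Type*} [Finite ι]
    (X : ι → C) : ∃ Z : C, ∀ i, Nonempty (X i ⟶ Z) := by
  obtain ⟨n, ⟨e⟩⟩ := Finite.exists_equiv_fin ι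
  obtain ⟨Z, hZ⟩ := hC n (X ∘ e.symm)
  exact ⟨Z, e.forall_congr_left.mpr hZ⟩

def IsCoconeOn (F : α ⥤ C) (s : Set α) {Z : C} (c : ∀ i ∈ s, F.obj i ⟶ Z) : Prop :=
  ∀ ⦃i j : α⦄ (hi : i ∈ s) (hj : j ∈ s) (hij : i ≤ j), F.map (homOfLE hij) ≫ c j hj = c i hi

variable {F : α ⥤ C} {s : Set α} {Z : C} {c : ∀ i ∈ s, F.obj i ⟶ Z}

theorem IsCoconeOn.comp (hc : IsCoconeOn F s c) {W : C} (g : Z ⟶ W) :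
    IsCoconeOn F s (fun i hi => c i hi ≫ g) :=
  fun i j hi hj hij => by rw [← Category.assoc, hc hi hj hij]

theorem IsCoconeOn.exists_leg_of_connIn (hc : IsCoconeOn F s c) {b : α}
    (hU : ConnIn {x | x ∈ s ∧ b < x}) :
    ∃ f : F.obj b ⟶ Z, ∀ x (hx : x ∈ s) (hbx : b < x), F.map (homOfLE hbx.le) ≫ c x hx = f := by
  obtain ⟨⟨u, hus, hbu⟩, hzigzag⟩ := hU
  refine ⟨F.map (homOfLE hbu.le) ≫ c u hus, fun x hx hbx => ?_⟩
  induction hzigzag u ⟨hus, hbu⟩ x ⟨hx, hbx⟩ with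
  | refl => rfl
  | tail _ hstep ih =>
    obtain ⟨⟨hy, hby⟩, -, hyx | hxy⟩ := hstep
    · rw [← ih hy hby, ← hc hy hx hyx, ← Category.assoc, ← F.map_comp, homOfLE_comp]
    · rw [← ih hy hby, ← hc hx hy hxy, ← Category.assoc, ← F.map_comp, homOfLE_comp]

theorem IsCoconeOn.insert_of_minimal {b : α} {c : ∀ i ∈ s \ {b}, F.obj i ⟶ Z}
    (hc : IsCoconeOn F (s \ {b}) c) (hmin : ∀ x ∈ s, ¬ x < b) (a : F.obj b ⟶ Z)
    (ha : ∀ j (hj : j ∈ s \ {b}) (hbj : b ≤ j), F.map (homOfLE hbj) ≫ c j hj = a) :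
    ∃ c' : ∀ i ∈ s, F.obj i ⟶ Z, IsCoconeOn F s c' := by
  classical
  refine ⟨fun i hi => if h : i = b then F.map (homOfLE h.le) ≫ a else c i ⟨hi, h⟩,
    fun i j hi hj hij => ?_⟩
  by_cases hjb : j = b
  · have hib : i = b := by_contra fun h => hmin i hi (lt_of_le_of_ne (hjb ▸ hij) h)
    simp only [dif_pos hib, dif_pos hjb, ← Category.assoc, ← F.map_comp, homOfLE_comp]
  · by_cases hib : i = b
    · subst hib
      simp only [dif_pos, dif_neg hjb, homOfLE_refl, F.map_id, Category.id_comp]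
      exact ha j ⟨hj, hjb⟩ hij
    · simp only [dif_neg hib, dif_neg hjb]
      exact hc ⟨hi, hib⟩ ⟨hj, hjb⟩ hij

theorem exists_isCoconeOn_of_components {t : Set α}
    (d : ∀ K : {K // IsComp t K}, ∀ i ∈ K.1, F.obj i ⟶ Z) (hd : ∀ K, IsCoconeOn F K.1 (d K)) :
    ∃ c : ∀ i ∈ t, F.obj i ⟶ Z, IsCoconeOn F t c ∧
      ∀ K i (hi : i ∈ K.1), c i (K.2.subset hi) = d K i hi := by
  let c : ∀ i ∈ t, F.obj i ⟶ Z := fun i hi =>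
    d ⟨componentIn t i, isComp_componentIn hi⟩ i (mem_componentIn_self hi)
  have hcd : ∀ K i (hi : i ∈ K.1), c i (K.2.subset hi) = d K i hi := by
    rintro ⟨K, hK⟩ i hi
    obtain rfl := hK.eq_componentIn hi
    rfl
  refine ⟨c, fun i j hi hj hij => ?_, hcd⟩
  let K : {K // IsComp t K} := ⟨componentIn t i, isComp_componentIn hi⟩
  have hjK : j ∈ K.1 := mem_componentIn_of_le hi hj hij
  rw [hcd K j hjK]
  exact hd K (mem_componentIn_self hi) hjK hij

theorem exists_isCoconeOn_of_treeLike [Finite α] (hC : HasAmalgamation C) (F : α ⥤ C)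
    {s : Set α} (hs : TreeLike s) : ∃ (Z : C) (c : ∀ i ∈ s, F.obj i ⟶ Z), IsCoconeOn F s c := by
  induction hs with
  | mk s b _ hmin hconn _ ih =>
    choose Z c hc using fun K : {K // IsComp (s \ {b}) K} => ih K.1 K.2
    choose f hf using fun K => (hc K).exists_leg_of_connIn (hconn K.1 K.2)
    obtain ⟨W, a, hg⟩ := hC.exists_of_finite f
    choose g hfg using hg
    obtain ⟨d, hd, hdc⟩ := exists_isCoconeOn_of_components _ fun K => (hc K).comp (g K)
    refine ⟨W, hd.insert_of_minimal hmin a fun j hj hbj => ?_⟩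
    have hbj : b < j := lt_of_le_of_ne hbj (Ne.symm hj.2)
    let K : {K // IsComp (s \ {b}) K} := ⟨componentIn _ j, isComp_componentIn hj⟩
    rw [hdc K j (mem_componentIn_self hj), ← Category.assoc, hf K j _ hbj, hfg K]

end Cocones

/-- Every diagram over a finite forest-like poset (a finite disjoint union of
tree-like posets, i.e. every connected component is tree-like) in a category
with the amalgamation property and the joint embedding property has a
cocone. -/
theorem stmt_16 {α : Type} [Fintype α] [PartialOrder α]
    (hforest : ∀ K : Set α, IsComp (Set.univ : Set α) K → TreeLike K)
    {C : Type u} [Category.{v} C]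
    (AP : ∀ {A B D : C} (f : A ⟶ B) (g : A ⟶ D),
      ∃ (X : C) (h : B ⟶ X) (k : D ⟶ X), f ≫ h = g ≫ k)
    (JEP : ∀ (n : ℕ) (o : Fin n → C), ∃ Z : C, ∀ k, Nonempty (o k ⟶ Z))
    (F : α ⥤ C) :
    ∃ (X : C) (c : ∀ i : α, F.obj i ⟶ X),
      ∀ {i j : α} (f : i ⟶ j), F.map f ≫ c j = c i := by
  choose Z c hc using fun K : {K // IsComp Set.univ K} =>
    exists_isCoconeOn_of_treeLike @AP F (hforest K.1 K.2)
  obtain ⟨W, hW⟩ := HasJointEmbedding.exists_of_finite JEP Z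
  obtain ⟨d, hd, -⟩ :=
    exists_isCoconeOn_of_components _ fun K => (hc K).comp (hW K).some
  exact ⟨W, fun i => d i trivial, fun f => hd trivial trivial (leOfHom f)⟩
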